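/- arXiv:1509.01560 — 6 statements merged into one kernel-verified Lean document; each statement's English description precedes it below -/
import Mathlib

section
/- A system of polynomials (h_1, …, h_L) in 𝔽_q[t][u] satisfies Condition (⋆) if and only if there exists a polynomial d ∈ 𝔽_q[t][u] which has a root modulo g for every nonzero g ∈ 𝔽_q[t] (i.e., for every nonzero g ∈ 𝔽_q[t] there is m ∈ 𝔽_q[t] with d(m) ≡ 0 (mod g)) and which divides h_i in 𝔽_q[t][u] for every 1 ≤ i ≤ L. -/
open Polynomial Classical

/-- Embedding of `F[t]` into `K_∞ = F((1/t))`, realized as Laurent series in `X = 1/t`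
(so `t ↦ X⁻¹`, i.e. the single Hahn series with exponent `-1`). -/
noncomputable def tEmbed (F : Type*) [Field F] : Polynomial F →+* LaurentSeries F :=
  (Polynomial.aeval (HahnSeries.single (-1 : ℤ) (1 : F))).toRingHom

/-- `ord` of an element of `K_∞` (in terms of `t`): the largest `t`-exponent, `⊥` if zero. -/
noncomputable def ordinf {F : Type*} [Field F] (α : LaurentSeries F) : EReal :=
  if α = 0 then ⊥ else (((-α.order : ℤ) : ℝ) : EReal)

/-- Fractional part `{α}`: the part with negative `t`-exponents (positive `X`-exponents). -/
noncomputable def fracPart {F : Type*} [Field F] (α : LaurentSeries F) : LaurentSeries F :=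
  { coeff := fun i => if 1 ≤ i then α.coeff i else 0,
    isPWO_support' := α.isPWO_support'.mono (fun i hi => by
      by_cases h : (1:ℤ) ≤ i <;> simp only [Function.mem_support, h, if_true, if_false] at hi ⊢ <;>
        first | exact hi | exact absurd rfl hi) }

/-- `res α`: the coefficient of `t⁻¹` in `α`. -/
noncomputable def res {F : Type*} [Field F] (α : LaurentSeries F) : F := α.coeff 1

/-- A polynomial is supported on `K ⊆ ℤ⁺` if its nonconstant coefficients are nonzero
exactly at the exponents in `K`. -/
def SupportedOn {R : Type*} [Semiring R] (h : Polynomial R) (K : Set ℕ) : Prop :=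
  (∀ k ∈ K, 0 < k) ∧ ∀ r : ℕ, 0 < r → (h.coeff r ≠ 0 ↔ r ∈ K)

/-- The shadow `S(K)` of `K ⊆ ℤ⁺`: positive integers `j` with `j ≼_p r` for some `r ∈ K`. -/
def Shadow (p : ℕ) (K : Set ℕ) : Set ℕ :=
  {j | 0 < j ∧ ∃ r ∈ K, ¬ p ∣ Nat.choose r j}

/-- `K* = {k ∈ K : p ∤ k and pᵛk ∉ S(K) for all v ≥ 1}`. -/
def Kstar (p : ℕ) (K : Set ℕ) : Set ℕ :=
  {k | k ∈ K ∧ ¬ p ∣ k ∧ ∀ v : ℕ, 0 < v → p ^ v * k ∉ Shadow p K}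

/-- `k` is maximal in `K` with respect to the partial order `≼_p`. -/
def MaximalIn (p : ℕ) (K : Set ℕ) (k : ℕ) : Prop :=
  k ∈ K ∧ ∀ r ∈ K, ¬ p ∣ Nat.choose r k → r = k

/-- The part of a polynomial consisting of the monomials with exponents in `S`. -/
noncomputable def portion {R : Type*} [Semiring R] (h : Polynomial R) (S : Set ℕ) :
    Polynomial R :=
  ∑ r ∈ h.support, if r ∈ S then Polynomial.C (h.coeff r) * Polynomial.X ^ r else 0

/-- The polynomial of degree `< N` with coefficient vector `c`. -/
noncomputable def polyOf {F : Type*} [Semiring F] (N : ℕ) (c : Fin N → F) : Polynomial F :=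
  ∑ i : Fin N, Polynomial.C (c i) * Polynomial.X ^ (i : ℕ)

/-- `ord` of a polynomial in `F[t]`, i.e. its degree, with `⊥` for `0`. -/
noncomputable def pOrd {F : Type*} [Field F] (x : Polynomial F) : EReal :=
  if x = 0 then ⊥ else ((x.natDegree : ℝ) : EReal)

/-!
Over the fraction field `K` of `F[t]` the ideal generated by the `h i` in `K[u]` is principal;
clearing denominators and taking the primitive part of a generator gives a common divisor `d` of
the `h i` in `F[t][u]` together with a nonzero `c ∈ F[t]` such that `c d = ∑ vᵢ hᵢ`. A common
root `m` of the `h i` modulo `c g` then satisfies `c g ∣ c d(m)`, so `d(m) ≡ 0 mod g`.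
-/

open scoped nonZeroDivisors

namespace Polynomial

variable {R : Type*} [CommRing R] [IsDomain R]

attribute [local instance] Polynomial.algebra Polynomial.isLocalization in
theorem exists_mem_associated_map_of_mem_map {K : Type*} [Field K] [Algebra R K]
    [IsFractionRing R K] {J : Ideal R[X]} {p : K[X]}
    (hp : p ∈ J.map (mapRingHom (algebraMap R K))) :
    ∃ x ∈ J, Associated (x.map (algebraMap R K)) p := by
  obtain ⟨⟨⟨x, hx⟩, ⟨_, b, hb, rfl⟩⟩, hpx⟩ :=
    (IsLocalization.mem_map_algebraMap_iff (R⁰.map C) K[X]).mp hp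
  refine ⟨x, hx, ?_⟩
  have hu : IsUnit (C (algebraMap R K b)) :=
    isUnit_C.mpr (IsFractionRing.to_map_ne_zero_of_mem_nonZeroDivisors hb).isUnit
  simp only [algebraMap_def, coe_mapRingHom, map_C] at hpx
  exact hpx ▸ associated_mul_unit_left p _ hu

theorem exists_C_mul_mem_and_dvd_of_mem [NormalizedGCDMonoid R] (J : Ideal R[X]) :
    ∃ d : R[X], ∃ c : R, c ≠ 0 ∧ C c * d ∈ J ∧ ∀ f ∈ J, d ∣ f := by
  let φ := algebraMap R (FractionRing R)
  obtain ⟨x, hxJ, hxp⟩ := exists_mem_associated_map_of_mem_map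
    (Submodule.IsPrincipal.generator_mem (J.map (mapRingHom φ)))
  have hx_dvd : ∀ f ∈ J, x.map φ ∣ f.map φ := fun f hf =>
    hxp.dvd_iff_dvd_left.mpr <| (Submodule.IsPrincipal.mem_iff_generator_dvd _).mp <|
      Ideal.mem_map_of_mem (mapRingHom φ) hf
  rcases eq_or_ne x 0 with rfl | hx0
  · refine ⟨0, 1, one_ne_zero, by simp, fun f hf => ?_⟩
    have hf0 := hx_dvd f hf
    rw [Polynomial.map_zero, zero_dvd_iff,
      Polynomial.map_eq_zero_iff (IsFractionRing.injective R (FractionRing R))] at hf0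
    exact hf0 ▸ dvd_rfl
  · refine ⟨x.primPart, x.content, content_eq_zero_iff.not.mpr hx0, ?_, fun f hf => ?_⟩
    · rwa [← eq_C_content_mul_primPart]
    · exact x.isPrimitive_primPart.dvd_of_fraction_map_dvd_fraction_map
        ((map_dvd φ x.primPart_dvd).trans (hx_dvd f hf))

theorem dvd_eval_of_C_mul_mem_span {ι : Type*} {h : ι → R[X]} {d : R[X]} {c g m : R}
    (hc : c ≠ 0) (hd : C c * d ∈ Ideal.span (Set.range h)) (hm : ∀ i, c * g ∣ (h i).eval m) :
    g ∣ d.eval m := by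
  have hspan : Ideal.span (Set.range h) ≤ (Ideal.span {c * g}).comap (evalRingHom m) :=
    Ideal.span_le.mpr <| by
      rintro _ ⟨i, rfl⟩
      exact Ideal.mem_span_singleton.mpr (hm i)
  have hcd := Ideal.mem_span_singleton.mp (hspan hd)
  rwa [coe_evalRingHom, eval_mul, eval_C, mul_dvd_mul_iff_left hc] at hcd

end Polynomial

theorem stmt3_general (F : Type*) [Field F]
    (L : ℕ) (h : Fin L → Polynomial (Polynomial F)) :
    (∀ g : Polynomial F, g ≠ 0 → ∃ m : Polynomial F, ∀ i, g ∣ (h i).eval m) ↔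
      ∃ d : Polynomial (Polynomial F),
        (∀ g : Polynomial F, g ≠ 0 → ∃ m : Polynomial F, g ∣ d.eval m) ∧
        ∀ i, d ∣ h i := by
  constructor
  · intro H
    obtain ⟨d, c, hc, hcd, hdvd⟩ := exists_C_mul_mem_and_dvd_of_mem (Ideal.span (Set.range h))
    refine ⟨d, fun g hg => ?_, fun i => hdvd _ (Ideal.subset_span ⟨i, rfl⟩)⟩
    obtain ⟨m, hm⟩ := H (c * g) (mul_ne_zero hc hg)
    exact ⟨m, dvd_eval_of_C_mul_mem_span hc hcd hm⟩
  · rintro ⟨d, hd_root, hdvd⟩ g hg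
    obtain ⟨m, hm⟩ := hd_root g hg
    exact ⟨m, fun i => hm.trans (eval_dvd (hdvd i))⟩

/-- **Lemma (jointly intersective systems have a single intersective common divisor).** -/
theorem stmt3 (q : ℕ) (F : Type*) [Field F] [Fintype F] (hcard : Fintype.card F = q)
    (L : ℕ) (h : Fin L → Polynomial (Polynomial F)) :
    (∀ g : Polynomial F, g ≠ 0 → ∃ m : Polynomial F, ∀ i, g ∣ (h i).eval m) ↔
      ∃ d : Polynomial (Polynomial F),
        (∀ g : Polynomial F, g ≠ 0 → ∃ m : Polynomial F, g ∣ d.eval m) ∧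
        ∀ i, d ∣ h i :=
  stmt3_general F L h
end

section
/- Suppose a system (h_1, …, h_L) of polynomials in 𝔽_q[t][u] satisfies Condition (⋆). Then there exists a sequence (r_x)_{x ∈ 𝔽_q[t]∖{0}} of elements of 𝔽_q[t] such that for all nonzero m, y ∈ 𝔽_q[t]: deg r_y < deg y, r_{my} ≡ r_y (mod y), and h_j(r_y) ≡ 0 (mod y) for all 1 ≤ j ≤ L. -/
/-! Choose a common root `m_g` modulo every `g ≠ 0` and an ultrafilter `U` containing, for each
`y ≠ 0`, the nonzero multiples of `y`. As there are only finitely many residues modulo `y`, `U`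
singles out one value `r_y` of `m_g mod y`. Any finitely many of these conditions hold at a common
`g` that is a multiple of `y` (and of `my`), and all three properties are read off from `m_g`. -/

open Polynomial Classical

theorem Submonoid.exists_ultrafilter_forall_dvd {M : Type*} [CommMonoid M] (S : Submonoid M) :
    ∃ U : Ultrafilter M, ∀ y ∈ S, ∀ᶠ g in U, g ∈ S ∧ y ∣ g := by
  let multiples : S → Filter M := fun y => Filter.principal {g | g ∈ S ∧ (y : M) ∣ g}
  have hdir : Directed (· ≥ ·) multiples := fun y z =>
    ⟨y * z, Filter.principal_mono.2 fun g hg => ⟨hg.1, (dvd_mul_right _ _).trans hg.2⟩,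
      Filter.principal_mono.2 fun g hg => ⟨hg.1, (dvd_mul_left _ _).trans hg.2⟩⟩
  have : (⨅ y, multiples y).NeBot :=
    Filter.iInf_neBot_of_directed hdir fun y => Filter.principal_neBot_iff.2 ⟨y, y.2, dvd_rfl⟩
  refine ⟨Ultrafilter.of (⨅ y, multiples y), fun y hy => Ultrafilter.of_le _ ?_⟩
  exact Filter.mem_iInf_of_mem ⟨y, hy⟩ (Filter.mem_principal_self _)

theorem Ultrafilter.exists_eventually_eq_of_finite_range {α β : Type*} (U : Ultrafilter α)
    {f : α → β} (hf : (Set.range f).Finite) : ∃ b, ∀ᶠ a in U, f a = b := by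
  obtain ⟨b, -, hb⟩ := (U.map f).eq_pure_of_finite_mem hf
    (Filter.mem_map.2 (Filter.univ_mem' fun a => ⟨a, rfl⟩))
  exact ⟨b, show {b} ∈ U.map f by rw [hb]; rfl⟩

theorem EuclideanDomain.dvd_sub_mod {R : Type*} [EuclideanDomain R] (x y : R) : y ∣ x - x % y :=
  ⟨x / y, by rw [mod_eq_sub_mul_div]; ring⟩

theorem EuclideanDomain.dvd_mod_sub_mod {R : Type*} [EuclideanDomain R] (x : R) {y z : R}
    (hyz : y ∣ z) : y ∣ x % z - x % y := by
  have := dvd_sub (dvd_sub_mod x y) (hyz.trans (dvd_sub_mod x z))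
  rwa [sub_sub_sub_cancel_left] at this

theorem Polynomial.dvd_eval_mod_iff {R : Type*} [EuclideanDomain R] (p : R[X]) (x y : R) :
    y ∣ p.eval (x % y) ↔ y ∣ p.eval x := by
  have := (EuclideanDomain.dvd_sub_mod x y).trans (sub_dvd_eval_sub x (x % y) p)
  exact (dvd_iff_dvd_of_dvd_sub this).symm

theorem Polynomial.finite_setOf_degree_lt {R : Type*} [Semiring R] [Finite R] (n : ℕ) :
    {p : R[X] | p.degree < n}.Finite := by
  have : Finite (degreeLT R n) := .of_equiv _ (degreeLTEquiv R n).toEquiv.symm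
  exact (Set.toFinite (degreeLT R n : Set R[X])).subset fun p hp => mem_degreeLT.2 hp

theorem Polynomial.finite_range_mod {F : Type*} [Field F] [Finite F] {y : F[X]} (hy : y ≠ 0) :
    (Set.range (· % y)).Finite := by
  refine (finite_setOf_degree_lt y.natDegree).subset ?_
  rintro _ ⟨x, rfl⟩
  exact (EuclideanDomain.mod_lt x hy).trans_eq (degree_eq_natDegree hy)

theorem stmt6_general (F : Type*) [Field F] [Fintype F]
    (L : ℕ) (h : Fin L → Polynomial (Polynomial F))
    (hstar : ∀ g : Polynomial F, g ≠ 0 → ∃ m : Polynomial F, ∀ i, g ∣ (h i).eval m) :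
    ∃ r : Polynomial F → Polynomial F, ∀ y : Polynomial F, y ≠ 0 →
      (r y).degree < y.degree ∧
      (∀ m : Polynomial F, m ≠ 0 → y ∣ (r (m * y) - r y)) ∧
      ∀ j, y ∣ (h j).eval (r y) := by
  choose! root hroot using hstar
  obtain ⟨U, hU⟩ := (nonZeroDivisors F[X]).exists_ultrafilter_forall_dvd
  have hres (y : F[X]) (hy : y ≠ 0) : ∃ s, ∀ᶠ g in U, root g % y = s :=
    U.exists_eventually_eq_of_finite_range
      ((finite_range_mod hy).subset (Set.range_comp_subset_range root (· % y)))
  choose! r hr using hres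
  refine ⟨r, fun y hy => ⟨?_, fun m hm => ?_, fun j => ?_⟩⟩
  · obtain ⟨g, hg⟩ := (hr y hy).exists
    exact hg ▸ EuclideanDomain.mod_lt _ hy
  · obtain ⟨g, hgmy, hgy⟩ := ((hr (m * y) (mul_ne_zero hm hy)).and (hr y hy)).exists
    rw [← hgmy, ← hgy]
    exact EuclideanDomain.dvd_mod_sub_mod _ (dvd_mul_left y m)
  · obtain ⟨g, hgy, hg, hyg⟩ :=
      ((hr y hy).and (hU y (mem_nonZeroDivisors_of_ne_zero hy))).exists
    rw [← hgy, dvd_eval_mod_iff]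
    exact hyg.trans (hroot g (nonZeroDivisors.ne_zero hg) j)

/-- **Lemma (compatible sequence of common roots for a system satisfying Condition (⋆)).** -/
theorem stmt6 (q : ℕ) (F : Type*) [Field F] [Fintype F] (hcard : Fintype.card F = q)
    (L : ℕ) (h : Fin L → Polynomial (Polynomial F))
    (hstar : ∀ g : Polynomial F, g ≠ 0 → ∃ m : Polynomial F, ∀ i, g ∣ (h i).eval m) :
    ∃ r : Polynomial F → Polynomial F, ∀ y : Polynomial F, y ≠ 0 →
      (r y).degree < y.degree ∧
      (∀ m : Polynomial F, m ≠ 0 → y ∣ (r (m * y) - r y)) ∧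
      ∀ j, y ∣ (h j).eval (r y) :=
  stmt6_general F L h hstar
end

section
/- Let M ∈ ℤ⁺ and let β_1, β_2, …, β_R ∈ K_∞ satisfy ord {β_j} ≥ −M for all 1 ≤ j ≤ R. Then there exists a nonzero x ∈ G_M such that |Σ_{j=1}^R e(x β_j)| ≥ R/(q^M − 1). -/
open Polynomial Classical

/-! Writing `x = ∑_{i<M} c_i t^i`, the map `c ↦ res (x β)` is the linear functional
`c ↦ ∑ c_i a_{i+1}`, where `a_k` is the coefficient of `t^{-k}` in `β`. The hypothesis on
`{β}` makes this functional nonzero, so summing `ψ` of it over all `x ∈ G_M` gives `0` by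
orthogonality of characters. The term `x = 0` contributes `R`, hence the `q^M - 1` nonzero `x`
contribute `-R` in total, and one of them contributes at least the average `R / (q^M - 1)`. -/

theorem Finset.exists_norm_sum_div_card_le_norm {ι E : Type*} [SeminormedAddCommGroup E]
    {s : Finset ι} (hs : s.Nonempty) (f : ι → E) :
    ∃ i ∈ s, ‖∑ j ∈ s, f j‖ / s.card ≤ ‖f i‖ := by
  refine Finset.exists_le_of_sum_le hs ?_
  rw [Finset.sum_const, nsmul_eq_mul, mul_div_cancel₀ _ (by exact_mod_cast hs.card_pos.ne')]
  exact norm_sum_le s f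

theorem AddChar.sum_dotProduct_eq_zero {ι F R : Type*} [Fintype ι] [DecidableEq ι] [Field F]
    [Fintype F] [CommRing R] [IsDomain R] {ψ : AddChar F R} (hψ : ψ ≠ 1) {b : ι → F}
    (hb : b ≠ 0) : ∑ c : ι → F, ψ (c ⬝ᵥ b) = 0 := by
  obtain ⟨a, ha⟩ := AddChar.ne_one_iff.1 hψ
  obtain ⟨i, hi⟩ := Function.ne_iff.1 hb
  let pairing : (ι → F) →+ F := AddMonoidHom.mk' (· ⬝ᵥ b) fun u v => add_dotProduct u v b
  refine AddChar.sum_eq_zero_of_ne_one (ψ := ψ.compAddMonoidHom pairing) ?_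
  refine AddChar.ne_one_iff.2 ⟨Pi.single i (a / b i), ?_⟩
  simpa [pairing, single_dotProduct, div_mul_cancel₀ a hi] using ha

section LaurentSeries

variable {F : Type*} [Field F]

theorem coeff_fracPart (α : LaurentSeries F) (k : ℤ) :
    (fracPart α).coeff k = if 1 ≤ k then α.coeff k else 0 := rfl

theorem exists_coeff_ne_zero_of_le_ordinf_fracPart {α : LaurentSeries F} {M : ℕ}
    (h : ((-(M : ℝ) : ℝ) : EReal) ≤ ordinf (fracPart α)) :
    ∃ k : ℤ, 1 ≤ k ∧ k ≤ M ∧ α.coeff k ≠ 0 := by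
  have hne : fracPart α ≠ 0 := by
    rintro hz
    rw [ordinf, if_pos hz, le_bot_iff] at h
    exact EReal.coe_ne_bot _ h
  rw [ordinf, if_neg hne, EReal.coe_le_coe_iff] at h
  have hcoeff : (fracPart α).coeff (fracPart α).order ≠ 0 :=
    HahnSeries.coeff_order_eq_zero.not.2 hne
  rw [coeff_fracPart] at hcoeff
  split_ifs at hcoeff with h1
  · have h' : -(M : ℤ) ≤ -(fracPart α).order := by exact_mod_cast h
    exact ⟨_, h1, by omega, hcoeff⟩
  · exact absurd rfl hcoeff

/-- The coefficients of `t⁻¹, …, t⁻ᴹ` in `α`. -/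
noncomputable def fracCoeffs (M : ℕ) (α : LaurentSeries F) : Fin M → F :=
  fun i => α.coeff ((i : ℤ) + 1)

theorem fracCoeffs_ne_zero {α : LaurentSeries F} {M : ℕ}
    (h : ((-(M : ℝ) : ℝ) : EReal) ≤ ordinf (fracPart α)) : fracCoeffs M α ≠ 0 := by
  obtain ⟨k, hk1, hkM, hk⟩ := exists_coeff_ne_zero_of_le_ordinf_fracPart h
  refine Function.ne_iff.2 ⟨⟨(k - 1).toNat, by omega⟩, ?_⟩
  rwa [fracCoeffs, show ((k - 1).toNat : ℤ) + 1 = k by omega]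

theorem tEmbed_C_mul_X_pow (a : F) (n : ℕ) :
    tEmbed F (C a * X ^ n) = HahnSeries.single (-(n : ℤ)) a := by
  have hC : algebraMap F (LaurentSeries F) a = HahnSeries.C a := by
    simp [HahnSeries.algebraMap_apply']
  change Polynomial.aeval _ _ = _
  rw [map_mul, map_pow, aeval_X, aeval_C, HahnSeries.single_pow, hC, HahnSeries.C_apply,
    HahnSeries.single_mul_single]
  norm_num

theorem res_tEmbed_polyOf_mul (M : ℕ) (c : Fin M → F) (α : LaurentSeries F) :
    res (tEmbed F (polyOf M c) * α) = c ⬝ᵥ fracCoeffs M α := by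
  simp only [res, polyOf, map_sum, Finset.sum_mul, HahnSeries.coeff_sum, dotProduct,
    fracCoeffs, tEmbed_C_mul_X_pow]
  refine Finset.sum_congr rfl fun i _ => ?_
  rw [← HahnSeries.coeff_single_mul_add (b := -(i : ℤ))]
  congr 1
  ring

end LaurentSeries

theorem coeff_polyOf {F : Type*} [Semiring F] (M : ℕ) (c : Fin M → F) (i : Fin M) :
    (polyOf M c).coeff i = c i := by
  simp [polyOf, Polynomial.finsetSum_coeff, Polynomial.coeff_C_mul, Polynomial.coeff_X_pow,
    Fin.val_eq_val]

theorem polyOf_ne_zero {F : Type*} [Semiring F] {M : ℕ} {c : Fin M → F} (hc : c ≠ 0) :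
    polyOf M c ≠ 0 := by
  obtain ⟨i, hi⟩ := Function.ne_iff.1 hc
  intro h
  exact hi (by simpa [h] using (coeff_polyOf M c i).symm)

theorem degree_polyOf_lt {F : Type*} [Semiring F] (M : ℕ) (c : Fin M → F) :
    (polyOf M c).degree < (M : WithBot ℕ) :=
  degree_sum_fin_lt c

theorem stmt7_general (q : ℕ) (F : Type*) [Field F] [Fintype F]
    (hcard : Fintype.card F = q) (ψ : AddChar F ℂ) (hψ : ψ ≠ 1)
    (M : ℕ) (hM : 0 < M) (R : ℕ) (β : Fin R → LaurentSeries F)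
    (hβ : ∀ j, ((-(M : ℝ) : ℝ) : EReal) ≤ ordinf (fracPart (β j))) :
    ∃ x : Polynomial F, x ≠ 0 ∧ x.degree < (M : WithBot ℕ) ∧
      (R : ℝ) / ((q : ℝ) ^ M - 1) ≤
        ‖∑ j, ψ (res (tEmbed F x * β j))‖ := by
  set S : (Fin M → F) → ℂ := fun c => ∑ j, ψ (c ⬝ᵥ fracCoeffs M (β j))
  have hsum : ∑ c, S c = 0 := by
    rw [Finset.sum_comm]
    exact Finset.sum_eq_zero fun j _ =>
      AddChar.sum_dotProduct_eq_zero hψ (fracCoeffs_ne_zero (hβ j))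
  have hS0 : S 0 = R := by simp [S]
  have hsum_ne : ∑ c ∈ Finset.univ.erase 0, S c = -R := by
    rw [← Finset.add_sum_erase _ _ (Finset.mem_univ 0), hS0] at hsum
    linear_combination hsum
  have hq : 1 < q ^ M := by
    rw [← hcard]
    exact Nat.one_lt_pow hM.ne' Fintype.one_lt_card
  have hcard_ne : ((Finset.univ.erase (0 : Fin M → F)).card : ℝ) = (q : ℝ) ^ M - 1 := by
    rw [Finset.card_erase_of_mem (Finset.mem_univ _), Finset.card_univ, Fintype.card_fun, hcard,
      Fintype.card_fin, Nat.cast_sub hq.le, Nat.cast_pow, Nat.cast_one]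
  have hcard_pos : (0 : ℝ) < (Finset.univ.erase (0 : Fin M → F)).card := by
    rw [hcard_ne, sub_pos]
    exact_mod_cast hq
  obtain ⟨c, hc, hle⟩ :=
    Finset.exists_norm_sum_div_card_le_norm (Finset.card_pos.1 (by exact_mod_cast hcard_pos)) S
  refine ⟨polyOf M c, polyOf_ne_zero (Finset.ne_of_mem_erase hc), degree_polyOf_lt M c, ?_⟩
  rw [hsum_ne, norm_neg, hcard_ne, Complex.norm_natCast] at hle
  simpa only [res_tEmbed_polyOf_mul] using hle

/-- **Lemma (large exponential sum from bounded fractional parts).** -/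
theorem stmt7 (p q : ℕ) [Fact p.Prime] (F : Type*) [Field F] [Fintype F] [CharP F p]
    (hcard : Fintype.card F = q) (ψ : AddChar F ℂ) (hψ : ψ ≠ 1)
    (M : ℕ) (hM : 0 < M) (R : ℕ) (β : Fin R → LaurentSeries F)
    (hβ : ∀ j, ((-(M : ℝ) : ℝ) : EReal) ≤ ordinf (fracPart (β j))) :
    ∃ x : Polynomial F, x ≠ 0 ∧ x.degree < (M : WithBot ℕ) ∧
      (R : ℝ) / ((q : ℝ) ^ M - 1) ≤
        ‖∑ j, ψ (res (tEmbed F x * β j))‖ :=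
  stmt7_general q F hcard ψ hψ M hM R β hβ
end

section
/- Let h_j ∈ 𝔽_q[t][u] be supported on K_j ⊆ ℤ⁺ for 1 ≤ j ≤ L, let K = K_1 ∪ … ∪ K_L, and suppose the K*-portion of (h_j)_{j=1}^L is linearly independent. Let β_1, …, β_L ∈ K_∞. Then there exist an L × L matrix 𝒯 with entries in 𝔽_q[t] and polynomials g_1, …, g_L ∈ 𝔽_q[t][u] such that: (1) each g_j is supported on a subset of K; (2) 𝒯 · (h_1（u）, …, h_L(u))ᵀ = (g_1(u), …, g_L(u))ᵀ; (3) there exist T_1, …, T_L ∈ K* with [g_i]_{T_j} = 0 whenever i ≠ j; (4) there exist γ_1, …, γ_L ∈ K_∞ with β_1 h_1(u) + … + β_L h_L(u) = γ_1 g_1(u) + … + γ_L g_L(u). -/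
/-!
The coefficients of the `h_j` at the exponents in `K*` form an `L × |K*|` matrix over
`𝔽_q(t)` whose rows are linearly independent, so some `L` of its columns, at exponents
`T_1, …, T_L ∈ K*`, give a nonsingular minor `N` with entries in `𝔽_q[t]`. Taking `𝒯 = adj N`,
the coefficient of `u^{T_k}` in `g_i = (𝒯 h)_i` is `det N · δ_{ik}`. Since
`det 𝒯 = (det N)^{L-1} ≠ 0` and `𝔽_q[t]` embeds into `K_∞`, `𝒯` is invertible over `K_∞`, and
`γ = β 𝒯⁻¹` rewrites `Σ β_j h_j` as `Σ γ_i g_i`.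
-/

open Polynomial Classical

open Matrix

section ColumnSelection

variable {K ι n : Type*} [Field K] [Fintype ι] [Fintype n] [DecidableEq n]

theorem Matrix.exists_det_submatrix_ne_zero_of_linearIndependent_rows (A : Matrix n ι K)
    (hA : LinearIndependent K A.row) : ∃ f : n → ι, (A.submatrix id f).det ≠ 0 := by
  have hspan : Submodule.span K (Set.range A.col) = ⊤ := by
    refine Submodule.eq_top_of_finrank_eq ?_
    rw [← rank_eq_finrank_span_cols, hA.rank_matrix, Module.finrank_fintype_fun_eq_card]
  obtain ⟨κ, a, -, hspan_a, hli_a⟩ := exists_linearIndependent' K A.col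
  let b : Module.Basis κ K (n → K) := Module.Basis.mk hli_a (by rw [hspan_a, hspan])
  let e : n ≃ κ := (b.indexEquiv (Pi.basisFun K n)).symm
  refine ⟨a ∘ e, ?_⟩
  have hcols : LinearIndependent K (A.submatrix id (a ∘ e)).col :=
    hli_a.comp e e.injective
  exact ((isUnit_iff_isUnit_det _).mp
    (linearIndependent_cols_iff_isUnit.mp hcols)).ne_zero

end ColumnSelection

section PolynomialVectors

variable {R : Type*} [CommRing R] {ι : Type*} [Fintype ι]

theorem coeff_map_C_mulVec {m : Type*} (T : Matrix m ι R) (h : ι → R[X]) (i : m) (r : ℕ) :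
    ((T.map C *ᵥ h) i).coeff r = (T *ᵥ fun j => (h j).coeff r) i := by
  simp only [mulVec, dotProduct, map_apply, finsetSum_coeff,
    coeff_C_mul]

theorem exists_coeff_ne_zero_of_coeff_map_C_mulVec_ne_zero {m : Type*} {T : Matrix m ι R}
    {h : ι → R[X]} {i : m} {r : ℕ} (hr : ((T.map C *ᵥ h) i).coeff r ≠ 0) :
    ∃ j, (h j).coeff r ≠ 0 := by
  by_contra! hzero
  apply hr
  rw [coeff_map_C_mulVec, show (fun j => (h j).coeff r) = 0 from funext hzero,
    mulVec_zero, Pi.zero_apply]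

def coeffMatrix (h : ι → R[X]) (t : ι → ℕ) : Matrix ι ι R :=
  of fun i j => (h i).coeff (t j)

theorem coeff_adjugate_coeffMatrix_mulVec [DecidableEq ι] (h : ι → R[X]) (t : ι → ℕ) (i k : ι) :
    (((coeffMatrix h t).adjugate.map C *ᵥ h) i).coeff (t k) =
      if i = k then (coeffMatrix h t).det else 0 := by
  rw [coeff_map_C_mulVec]
  change ((coeffMatrix h t).adjugate * coeffMatrix h t) i k = _
  rw [adjugate_mul, Matrix.smul_apply, one_apply, smul_eq_mul, mul_ite, mul_one,
    mul_zero]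

theorem exists_sum_C_mul_eq_sum_C_mul_mulVec [DecidableEq ι] (M : Matrix ι ι R)
    (hM : IsUnit M.det) (v : ι → R[X]) (β : ι → R) :
    ∃ γ : ι → R, ∑ j, C (β j) * v j = ∑ i, C (γ i) * (M.map C *ᵥ v) i := by
  refine ⟨β ᵥ* M⁻¹, ?_⟩
  change (C ∘ β) ⬝ᵥ v = (C ∘ (β ᵥ* M⁻¹)) ⬝ᵥ (M.map C *ᵥ v)
  rw [dotProduct_mulVec]
  congr 1
  funext j
  rw [Function.comp_apply, ← RingHom.map_vecMul, vecMul_vecMul,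
    nonsing_inv_mul _ hM, vecMul_one]

end PolynomialVectors

section Portion

variable {R : Type*} [CommRing R]

theorem portion_coeff (h : R[X]) (S : Set ℕ) (n : ℕ) :
    (portion h S).coeff n = if n ∈ S then h.coeff n else 0 := by
  by_cases hn : n ∈ h.support
  · rw [portion, finsetSum_coeff, Finset.sum_eq_single_of_mem n hn]
    · split_ifs <;> simp
    · intro r _ hrn
      split_ifs <;> simp [coeff_X_pow, Ne.symm hrn]
  · rw [portion, finsetSum_coeff, notMem_support_iff.mp hn, ite_self]
    refine Finset.sum_eq_zero fun r hr => ?_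
    have hrn : n ≠ r := fun e => hn (e ▸ hr)
    split_ifs <;> simp [coeff_X_pow, hrn]

variable {K : Type*} [Field K] [Algebra R K] {ι : Type*}

theorem linearIndependent_coeff_rows_of_portion (h : ι → R[X]) (s : Finset ℕ)
    (hli : LinearIndependent K fun j => (portion (h j) s).map (algebraMap R K)) :
    LinearIndependent K (Matrix.of fun j (k : s) => algebraMap R K ((h j).coeff k)).row := by
  refine LinearIndependent.of_comp (∑ k : s, (monomial (k : ℕ)).comp (LinearMap.proj k)) ?_
  convert hli using 1
  funext j
  ext n
  simp only [Finset.univ_eq_attach, LinearMap.coe_sum, LinearMap.coe_comp, LinearMap.coe_proj,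
    of_row, Function.comp_apply, Finset.sum_apply, Function.eval, finsetSum_coeff,
    coeff_monomial, coeff_map, portion_coeff, Finset.mem_coe]
  rw [Finset.sum_attach s fun k => if k = n then algebraMap R K ((h j).coeff k) else 0,
    Finset.sum_ite_eq', apply_ite (algebraMap R K), map_zero]

theorem exists_coeffMatrix_det_ne_zero [FaithfulSMul R K] [Fintype ι] [DecidableEq ι]
    (h : ι → R[X]) (s : Finset ℕ)
    (hli : LinearIndependent K fun j => (portion (h j) s).map (algebraMap R K)) :
    ∃ t : ι → ℕ, (∀ j, t j ∈ s) ∧ (coeffMatrix h t).det ≠ 0 := by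
  obtain ⟨f, hf⟩ := Matrix.exists_det_submatrix_ne_zero_of_linearIndependent_rows _
    (linearIndependent_coeff_rows_of_portion h s hli)
  refine ⟨fun j => f j, fun j => (f j).2, fun hzero => hf ?_⟩
  change ((algebraMap R K).mapMatrix (coeffMatrix h fun j => f j)).det = 0
  rw [← RingHom.map_det, hzero, map_zero]

end Portion

theorem tEmbed_monomial {F : Type*} [Field F] (n : ℕ) (a : F) :
    tEmbed F (monomial n a) = HahnSeries.single (-(n : ℤ)) a := by
  rw [tEmbed, AlgHom.toRingHom_eq_coe, RingHom.coe_coe, aeval_monomial,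
    HahnSeries.single_pow, one_pow, LaurentSeries.algebraMap_apply, HahnSeries.C_apply,
    HahnSeries.single_mul_single, zero_add, mul_one, smul_neg, nsmul_eq_mul, mul_one]

theorem tEmbed_coeff_neg {F : Type*} [Field F] (f : F[X]) (n : ℕ) :
    (tEmbed F f).coeff (-(n : ℤ)) = f.coeff n := by
  induction f using Polynomial.induction_on' with
  | add f g hf hg => rw [map_add, HahnSeries.coeff_add, hf, hg, coeff_add]
  | monomial m a =>
    rw [tEmbed_monomial, HahnSeries.coeff_single, coeff_monomial]
    simp only [neg_inj, Nat.cast_inj, eq_comm]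

theorem tEmbed_injective (F : Type*) [Field F] : Function.Injective (tEmbed F) := fun f g hfg =>
  ext fun n => by rw [← tEmbed_coeff_neg, hfg, tEmbed_coeff_neg]

theorem Kstar_subset (p : ℕ) (K : Set ℕ) : Kstar p K ⊆ K := fun _ hk => hk.1

theorem stmt11_general (p : ℕ) (F : Type*) [Field F]
    (L : ℕ) (Kfam : Fin L → Finset ℕ) (K : Finset ℕ)
    (h : Fin L → Polynomial (Polynomial F))
    (hsupp : ∀ j, SupportedOn (h j) ((Kfam j : Set ℕ)))
    (hK : (⋃ j, (Kfam j : Set ℕ)) = (K : Set ℕ))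
    (hli : LinearIndependent (RatFunc F) fun j : Fin L =>
      (portion (h j) (Kstar p (K : Set ℕ))).map (algebraMap (Polynomial F) (RatFunc F)))
    (β : Fin L → LaurentSeries F) :
    ∃ (T : Matrix (Fin L) (Fin L) (Polynomial F)) (g : Fin L → Polynomial (Polynomial F)),
      -- (1) each g_j is supported on a subset of K
      (∀ j : Fin L, ∀ r : ℕ, 0 < r → (g j).coeff r ≠ 0 → r ∈ (K : Set ℕ)) ∧
      -- (2) T ⬝ (h₁(u), …, h_L(u))ᵀ = (g₁(u), …, g_L(u))ᵀ
      (∀ i : Fin L, ∑ j : Fin L, Polynomial.C (T i j) * h j = g i) ∧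
      -- (3)
      (∃ Tj : Fin L → ℕ, (∀ j, Tj j ∈ Kstar p (K : Set ℕ)) ∧
        ∀ i j : Fin L, i ≠ j → (g i).coeff (Tj j) = 0) ∧
      -- (4)
      (∃ γ : Fin L → LaurentSeries F,
        ∑ j : Fin L, Polynomial.C (β j) * (h j).map (tEmbed F) =
          ∑ j : Fin L, Polynomial.C (γ j) * (g j).map (tEmbed F)) := by
  have hfin : (Kstar p (K : Set ℕ)).Finite := K.finite_toSet.subset (Kstar_subset p _)
  obtain ⟨t, ht, hdet⟩ := exists_coeffMatrix_det_ne_zero h hfin.toFinset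
    (by rwa [hfin.coe_toFinset])
  set T := (coeffMatrix h t).adjugate
  have hTdet : IsUnit (T.map (tEmbed F)).det := by
    rw [← RingHom.mapMatrix_apply, ← RingHom.map_det, det_adjugate, isUnit_iff_ne_zero,
      map_ne_zero_iff _ (tEmbed_injective F)]
    exact pow_ne_zero _ hdet
  obtain ⟨γ, hγ⟩ :=
    exists_sum_C_mul_eq_sum_C_mul_mulVec _ hTdet (fun j => (h j).map (tEmbed F)) β
  refine ⟨T, T.map C *ᵥ h, fun j r hr hne => ?_, fun i => rfl,
    ⟨t, fun j => hfin.mem_toFinset.1 (ht j), fun i j hij => ?_⟩, γ, hγ.trans ?_⟩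
  · obtain ⟨k, hk⟩ := exists_coeff_ne_zero_of_coeff_map_C_mulVec_ne_zero hne
    exact hK ▸ Set.mem_iUnion.2 ⟨k, ((hsupp k).2 r hr).1 hk⟩
  · rw [coeff_adjugate_coeffMatrix_mulVec, if_neg hij]
  · refine Finset.sum_congr rfl fun i _ => ?_
    rw [← coe_mapRingHom, RingHom.map_mulVec]
    congr 2
    ext j k : 2
    simp

/-- **Lemma (diagonalization with respect to the K*-portion).** -/
theorem stmt11 (p q : ℕ) [Fact p.Prime] (F : Type*) [Field F] [Fintype F] [CharP F p]
    (hcard : Fintype.card F = q)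
    (L : ℕ) (Kfam : Fin L → Finset ℕ) (K : Finset ℕ)
    (h : Fin L → Polynomial (Polynomial F))
    (hsupp : ∀ j, SupportedOn (h j) ((Kfam j : Set ℕ)))
    (hK : (⋃ j, (Kfam j : Set ℕ)) = (K : Set ℕ))
    (hli : LinearIndependent (RatFunc F) fun j : Fin L =>
      (portion (h j) (Kstar p (K : Set ℕ))).map (algebraMap (Polynomial F) (RatFunc F)))
    (β : Fin L → LaurentSeries F) :
    ∃ (T : Matrix (Fin L) (Fin L) (Polynomial F)) (g : Fin L → Polynomial (Polynomial F)),
      -- (1) each g_j is supported on a subset of K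
      (∀ j : Fin L, ∀ r : ℕ, 0 < r → (g j).coeff r ≠ 0 → r ∈ (K : Set ℕ)) ∧
      -- (2) T ⬝ (h₁(u), …, h_L(u))ᵀ = (g₁(u), …, g_L(u))ᵀ
      (∀ i : Fin L, ∑ j : Fin L, Polynomial.C (T i j) * h j = g i) ∧
      -- (3)
      (∃ Tj : Fin L → ℕ, (∀ j, Tj j ∈ Kstar p (K : Set ℕ)) ∧
        ∀ i j : Fin L, i ≠ j → (g i).coeff (Tj j) = 0) ∧
      -- (4)
      (∃ γ : Fin L → LaurentSeries F,
        ∑ j : Fin L, Polynomial.C (β j) * (h j).map (tEmbed F) =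
          ∑ j : Fin L, Polynomial.C (γ j) * (g j).map (tEmbed F)) :=
  stmt11_general p F L Kfam K h hsupp hK hli β
end

section
/- Let f(u) = Σ_{r ∈ K ∪ {0}} α_r u^r be a polynomial supported on a finite set K ⊆ ℤ⁺ with coefficients in K_∞, let s ∈ 𝔽_q[t], and let k_1, …, k_M be maximal elements of K with respect to ≼_p. Then the polynomial y ↦ f(y + s) can be written as f(y+s) = Σ_{i=1}^M α_{k_i} y^{k_i} + Σ_{j ∈ S(K)∖{k_1,…,k_M}} α'_j y^j + α'_0 for some α'_j, α'_0 ∈ K_∞; in particular, the nonconstant terms of f(y+s) are supported on a subset of S(K), and for every maximal k ∈ K the y^k coefficient of f(y+s) equals α_k. -/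
open Polynomial Classical

lemma natCast_laurent_eq_zero_iff {F : Type*} [Field F] (p : ℕ) [CharP F p] (m : ℕ) :
    (m : LaurentSeries F) = 0 ↔ p ∣ m := by
  rw [← map_natCast (HahnSeries.C : F →+* LaurentSeries F)]
  rw [show ((0 : LaurentSeries F) = HahnSeries.C (0 : F)) by simp]
  rw [HahnSeries.C_injective.eq_iff, CharP.cast_eq_zero_iff F p m]

/-- **Lemma (shifting `y ↦ y + s` preserves the coefficients at maximal exponents and is
supported on the shadow `S(K)`).** -/
theorem stmt13 (p q : ℕ) [Fact p.Prime] (F : Type*) [Field F] [Fintype F] [CharP F p]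
    (hcard : Fintype.card F = q)
    (K : Finset ℕ) (f : Polynomial (LaurentSeries F)) (hf : SupportedOn f (K : Set ℕ))
    (s : Polynomial F) (M : ℕ) (ks : Fin M → ℕ)
    (hks : ∀ i, MaximalIn p (K : Set ℕ) (ks i)) :
    -- the nonconstant terms of f(y+s) are supported on a subset of S(K)
    (∀ r : ℕ, 0 < r →
        (f.comp (Polynomial.X + Polynomial.C (tEmbed F s))).coeff r ≠ 0 →
        r ∈ Shadow p (K : Set ℕ)) ∧
    -- the coefficient of y^(k_i) in f(y+s) is α_(k_i)
    (∀ i : Fin M,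
      (f.comp (Polynomial.X + Polynomial.C (tEmbed F s))).coeff (ks i) = f.coeff (ks i)) ∧
    -- more generally, for every maximal k ∈ K the y^k coefficient of f(y+s) equals α_k
    ∀ k : ℕ, MaximalIn p (K : Set ℕ) k →
      (f.comp (Polynomial.X + Polynomial.C (tEmbed F s))).coeff k = f.coeff k := by
  have key : ∀ k : ℕ, MaximalIn p (K : Set ℕ) k →
      (f.comp (Polynomial.X + Polynomial.C (tEmbed F s))).coeff k = f.coeff k := by
    intro k hk
    rw [← taylor_apply, taylor_coeff]
    have hD : f.hasseDeriv k = Polynomial.C (f.coeff k) := by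
      ext n
      rw [Polynomial.hasseDeriv_coeff, Polynomial.coeff_C]
      rcases Nat.eq_zero_or_pos n with hn | hn
      · subst hn; simp [Nat.choose_self]
      · rw [if_neg hn.ne']
        by_cases hc : f.coeff (n + k) = 0
        · rw [hc, mul_zero]
        · have hmem : n + k ∈ (K : Set ℕ) :=
            (hf.2 (n + k) (by omega)).mp hc
          have hdvd : p ∣ Nat.choose (n + k) k := by
            by_contra hnd
            have := hk.2 (n + k) hmem hnd
            omega
          rw [(natCast_laurent_eq_zero_iff p _).mpr hdvd, zero_mul]
    rw [hD, Polynomial.eval_C]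
  refine ⟨?_, fun i => key (ks i) (hks i), key⟩
  intro r hr hne
  rw [← taylor_apply, taylor_coeff] at hne
  by_contra hrs
  apply hne
  have hD : f.hasseDeriv r = 0 := by
    ext n
    rw [Polynomial.hasseDeriv_coeff, Polynomial.coeff_zero]
    by_cases hc : f.coeff (n + r) = 0
    · rw [hc, mul_zero]
    · have hmem : n + r ∈ (K : Set ℕ) := (hf.2 (n + r) (by omega)).mp hc
      have hdvd : p ∣ Nat.choose (n + r) r := by
        by_contra hnd
        exact hrs ⟨hr, n + r, hmem, hnd⟩
      rw [(natCast_laurent_eq_zero_iff p _).mpr hdvd, zero_mul]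
  rw [hD, Polynomial.eval_zero]
end

section
/- The polynomial h(u) = (u² − t)(u² − (t+1))(u² − (t²+t)) ∈ 𝔽_5[t][u] has a root modulo g for every nonzero g ∈ 𝔽_5[t]; that is, for every nonzero g ∈ 𝔽_5[t] there exists x ∈ 𝔽_5[t] with h(x) ≡ 0 (mod g). -/
open Polynomial

instance : Fact (Nat.Prime 5) := ⟨by norm_num⟩

/-- The polynomial `h(u) = (u² − t)(u² − (t+1))(u² − (t²+t))` over `𝔽₅[t]`. -/
noncomputable def hExample : Polynomial (Polynomial (ZMod 5)) :=
  (Polynomial.X ^ 2 - Polynomial.C Polynomial.X) *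
    (Polynomial.X ^ 2 - Polynomial.C (Polynomial.X + 1)) *
    (Polynomial.X ^ 2 - Polynomial.C (Polynomial.X ^ 2 + Polynomial.X))

namespace Stmt16Aux

abbrev R5 := Polynomial (ZMod 5)

lemma hEval (x : R5) : hExample.eval x =
    (x ^ 2 - X) * (x ^ 2 - (X + 1)) * (x ^ 2 - (X ^ 2 + X)) := by
  simp [hExample]

lemma five_zero : (5 : R5) = 0 := by
  have h : (5 : ZMod 5) = 0 := by decide
  rw [← map_ofNat (Polynomial.C : ZMod 5 →+* R5) 5, h, map_zero]

-- nonsquare * nonsquare = square in a finite field of odd characteristic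
lemma sq_of_nonsq {F : Type} [Field F] [Finite F] {a b : F} (ha : a ≠ 0) (hb : b ≠ 0)
    (hsa : ¬ IsSquare a) (hsb : ¬ IsSquare b) : IsSquare (a * b) := by
  classical
  letI := Fintype.ofFinite F
  have h1 : quadraticChar F a = -1 := quadraticChar_neg_one_iff_not_isSquare.mpr hsa
  have h2 : quadraticChar F b = -1 := quadraticChar_neg_one_iff_not_isSquare.mpr hsb
  have : quadraticChar F (a * b) = 1 := by rw [map_mul, h1, h2]; norm_num
  exact (quadraticChar_one_iff_isSquare (mul_ne_zero ha hb)).mp this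

-- base case: root mod p
lemma base (p : R5) (hp : Prime p) :
    ∃ a x : R5, (a = X ∨ a = X + 1 ∨ a = X ^ 2 + X) ∧ ¬ p ∣ a ∧ p ∣ x ^ 2 - a := by
  by_cases h0 : p ∣ X
  · refine ⟨X + 1, 1, Or.inr (Or.inl rfl), ?_, ?_⟩
    · intro h; exact hp.not_unit (isUnit_of_dvd_one (by simpa using dvd_sub h h0))
    · have : (1 : R5) ^ 2 - (X + 1) = -X := by ring
      rw [this]; exact Dvd.dvd.neg_right h0
  by_cases h1 : p ∣ X + 1
  · refine ⟨X, 2, Or.inl rfl, h0, ?_⟩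
    have : (2 : R5) ^ 2 - X = -(X + 1) := by linear_combination five_zero
    rw [this]; exact Dvd.dvd.neg_right h1
  · -- both nonunits mod p; pass to residue field
    haveI : Fact (Irreducible p) := ⟨hp.irreducible⟩
    let F := AdjoinRoot p
    haveI : Module.Finite (ZMod 5) F := (AdjoinRoot.powerBasis hp.ne_zero).finite
    haveI : Finite F := Module.finite_of_finite (ZMod 5)
    have hα : (AdjoinRoot.mk p X : F) ≠ 0 := by
      rw [Ne, AdjoinRoot.mk_eq_zero]; exact h0
    have hβ : (AdjoinRoot.mk p (X + 1) : F) ≠ 0 := by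
      rw [Ne, AdjoinRoot.mk_eq_zero]; exact h1
    have key : ∀ a : R5, IsSquare (AdjoinRoot.mk p a : F) → ∃ x : R5, p ∣ x ^ 2 - a := by
      intro a ⟨r, hr⟩
      obtain ⟨x, rfl⟩ := AdjoinRoot.mk_surjective r
      refine ⟨x, ?_⟩
      rw [← AdjoinRoot.mk_eq_zero, map_sub, map_pow, hr, sq, sub_self]
    by_cases hsa : IsSquare (AdjoinRoot.mk p X : F)
    · obtain ⟨x, hx⟩ := key X hsa
      exact ⟨X, x, Or.inl rfl, h0, hx⟩
    by_cases hsb : IsSquare (AdjoinRoot.mk p (X + 1) : F)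
    · obtain ⟨x, hx⟩ := key (X + 1) hsb
      exact ⟨X + 1, x, Or.inr (Or.inl rfl), h1, hx⟩
    · have hsq : IsSquare (AdjoinRoot.mk p (X ^ 2 + X) : F) := by
        have : (AdjoinRoot.mk p (X ^ 2 + X) : F) =
            AdjoinRoot.mk p X * AdjoinRoot.mk p (X + 1) := by
          rw [← map_mul]; congr 1; ring
        rw [this]
        exact sq_of_nonsq hα hβ hsa hsb
      obtain ⟨x, hx⟩ := key _ hsq
      refine ⟨X ^ 2 + X, x, Or.inr (Or.inr rfl), ?_, hx⟩
      intro h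
      have : (X : R5) ^ 2 + X = X * (X + 1) := by ring
      rw [this] at h
      rcases hp.dvd_mul.mp h with h | h
      exacts [h0 h, h1 h]

-- Hensel lifting
lemma lift (p : R5) (hp : Prime p) (a : R5) (ha : ¬ p ∣ a)
    (h : ∃ x : R5, p ∣ x ^ 2 - a) (k : ℕ) : ∃ x : R5, p ^ k ∣ x ^ 2 - a := by
  induction k with
  | zero => exact ⟨0, by simp⟩
  | succ k ih =>
    rcases Nat.eq_zero_or_pos k with rfl | hk
    · simpa using h
    obtain ⟨y, d, hd⟩ := ih
    obtain ⟨m, rfl⟩ : ∃ m, k = m + 1 := ⟨k - 1, by omega⟩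
    have hpy : ¬ p ∣ y := by
      intro hpy
      have hsq : p ∣ y ^ 2 := by rw [sq]; exact hpy.mul_right y
      have hpk : p ∣ y ^ 2 - a := (dvd_pow_self p (Nat.succ_ne_zero m)).trans ⟨d, hd⟩
      exact ha (by simpa using dvd_sub hsq hpk)
    haveI : Fact (Irreducible p) := ⟨hp.irreducible⟩
    -- find c with p ∣ 2 * y * c + d
    have h2y : (AdjoinRoot.mk p (2 * y) : AdjoinRoot p) ≠ 0 := by
      rw [Ne, AdjoinRoot.mk_eq_zero]
      intro hdvd
      rcases hp.dvd_mul.mp hdvd with h | h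
      · exact hp.not_unit (isUnit_of_dvd_one (h.trans ⟨3, by linear_combination -five_zero⟩))
      · exact hpy h
    obtain ⟨c, hc⟩ := AdjoinRoot.mk_surjective
      ((AdjoinRoot.mk p (-d) : AdjoinRoot p) / AdjoinRoot.mk p (2 * y))
    have hpc : p ∣ 2 * y * c + d := by
      rw [← AdjoinRoot.mk_eq_zero, map_add, map_mul, hc, mul_div_cancel₀ _ h2y,
        ← map_add]
      simp
    obtain ⟨e, he⟩ := hpc
    exact ⟨y + c * p ^ (m + 1), e + c ^ 2 * p ^ m, by
      linear_combination hd + p ^ (m + 1) * he⟩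

end Stmt16Aux

open Stmt16Aux in
/-- **`h(u) = (u² − t)(u² − (t+1))(u² − (t²+t))` has a root modulo every nonzero
`g ∈ 𝔽₅[t]`.** -/
theorem stmt16 :
    ∀ g : Polynomial (ZMod 5), g ≠ 0 →
      ∃ x : Polynomial (ZMod 5), g ∣ hExample.eval x := by
  intro g hg
  revert hg
  induction g using UniqueFactorizationMonoid.induction_on_coprime with
  | h0 => exact fun h => absurd rfl h
  | h1 hu => exact fun _ => ⟨0, hu.dvd⟩
  | hpr i hp =>
    intro _
    rename_i p _
    obtain ⟨a, x0, hmem, ha, hx0⟩ := base p hp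
    obtain ⟨x, hx⟩ := lift p hp a ha ⟨x0, hx0⟩ i
    refine ⟨x, ?_⟩
    rw [hEval]
    rcases hmem with rfl | rfl | rfl
    · exact hx.trans (Dvd.dvd.mul_right (dvd_mul_right _ _) _)
    · exact hx.trans (Dvd.dvd.mul_right (dvd_mul_left _ _) _)
    · exact hx.trans (dvd_mul_left _ _)
  | hcp hrel hx hy =>
    rename_i x y
    intro hg
    have hx0 : x ≠ 0 := fun h => hg (by simp [h])
    have hy0 : y ≠ 0 := fun h => hg (by simp [h])
    obtain ⟨xa, hxa⟩ := hx hx0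
    obtain ⟨xb, hxb⟩ := hy hy0
    have hco : IsCoprime x y := hrel.isCoprime
    obtain ⟨u, v, huv⟩ := hco
    set z := xa * (v * y) + xb * (u * x) with hz
    have h1 : x ∣ z - xa := ⟨u * (xb - xa), by linear_combination xa * huv⟩
    have h2 : y ∣ z - xb := ⟨v * (xa - xb), by linear_combination xb * huv⟩
    have d1 : x ∣ hExample.eval z := by
      have := h1.trans (sub_dvd_eval_sub z xa hExample)
      simpa using dvd_add this hxa
    have d2 : y ∣ hExample.eval z := by
      have := h2.trans (sub_dvd_eval_sub z xb hExample)
      simpa using dvd_add this hxb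
    exact ⟨z, (hrel.isCoprime).mul_dvd d1 d2⟩
end
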